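/- Let k be a field and C the coalgebra with basis {α_n : n ∈ ℕ}, comultiplication Δ(α_n) = Σ_{i+j=n} α_i ⊗ α_j, and counit ε(α_n) = δ_{n,0}. If f : C → C is a coalgebra morphism, then f(α_0) = α_0 and there exist scalars λ_1, λ_2, ... in k such that for all n ≥ 1, f(α_n) = Σ_{r=1}^{n} (Σ_{n_1+...+n_r = n, each n_i ≥ 1} λ_{n_1}···λ_{n_r}) α_r. -/

import Mathlib

open scoped TensorProduct
open Finset

/-!
Write `f (α n) = ∑ m, A n m • α m`. Comparing the `(p, q)`-coordinates of `Δ (f (α n))` and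
`(f ⊗ f) (Δ (α n))` gives `A n (p + q) = ∑ i ≤ n, A i p * A (n - i) q`, and `ε ∘ f = ε` gives
`A n 0 = δ n 0`. For `n = 0` this forces `A 0 m = (A 0 1) ^ m`; as `f (α 0)` has finite support,
`A 0 1` is nilpotent, hence zero. With `λ i := A i 1`, the case `p = 1` then becomes the recursion
`A n (r + 1) = ∑ 1 ≤ i ≤ n, λ i * A (n - i) r`, which is the one obeyed by the sums over
compositions of `n` into `r` blocks (split off the first block).
-/

namespace Composition

variable {R : Type*} [Semiring R]

/-- The coefficient of `X ^ n` in `(∑ i ≥ 1, lam i * X ^ i) ^ r`. -/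
def blockProdSum (lam : ℕ → R) (n r : ℕ) : R :=
  ∑ c ∈ univ.filter (fun c : Composition n => c.length = r), (c.blocks.map lam).prod

theorem blockProdSum_of_lt (lam : ℕ → R) {n r : ℕ} (h : n < r) : blockProdSum lam n r = 0 :=
  sum_eq_zero fun c hc => absurd c.length_le (by rw [(mem_filter.1 hc).2]; omega)

theorem blockProdSum_zero_right (lam : ℕ → R) (n : ℕ) :
    blockProdSum lam n 0 = if n = 0 then 1 else 0 := by
  split_ifs with hn
  · subst hn
    have hnil (c : Composition 0) : c.blocks = [] := c.blocks_eq_nil.2 rfl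
    simp [blockProdSum, hnil, composition_card]
  · exact sum_eq_zero fun c hc => absurd (mem_filter.1 hc).2 (by simpa using hn)

theorem blockProdSum_zero_left (lam : ℕ → R) (r : ℕ) :
    blockProdSum lam 0 r = if r = 0 then 1 else 0 := by
  rcases Nat.eq_zero_or_pos r with rfl | hr
  · simp [blockProdSum_zero_right]
  · simp [blockProdSum_of_lt lam hr, hr.ne']

def cons {n i : ℕ} (hi : 0 < i) (hin : i ≤ n) (c : Composition (n - i)) : Composition n where
  blocks := i :: c.blocks
  blocks_pos hj := (List.mem_cons.1 hj).elim (· ▸ hi) c.blocks_pos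
  blocks_sum := by simp [c.blocks_sum]; omega

def tail {n : ℕ} (c : Composition n) : Composition (n - c.blocks.headI) where
  blocks := c.blocks.tail
  blocks_pos hj := c.blocks_pos (List.mem_of_mem_tail hj)
  blocks_sum := by
    have h := c.blocks_sum
    cases hb : c.blocks with
    | nil => simp_all
    | cons i l => rw [hb, List.sum_cons] at h; simp; omega

theorem blockProdSum_succ (lam : ℕ → R) (n r : ℕ) :
    blockProdSum lam n (r + 1) = ∑ i ∈ Icc 1 n, lam i * blockProdSum lam (n - i) r := by
  simp only [blockProdSum, mul_sum]
  rw [sum_sigma']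
  refine sum_bij' (fun c _ => ⟨c.blocks.headI, c.tail⟩)
    (fun p hp => cons (mem_Icc.1 (mem_sigma.1 hp).1).1 (mem_Icc.1 (mem_sigma.1 hp).1).2 p.2)
    ?_ ?_ ?_ ?_ ?_
  · intro c hc
    obtain ⟨i, l, hb⟩ := List.exists_cons_of_length_eq_add_one (mem_filter.1 hc).2
    have hi := c.blocks_pos (hb ▸ List.mem_cons_self)
    have hsum : i + l.sum = n := by simpa [hb] using c.blocks_sum
    have hlen : l.length = r := by simpa [length, hb] using (mem_filter.1 hc).2
    simp [tail, length, hb, hlen]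
    omega
  · intro p hp
    simp only [mem_sigma, mem_filter, mem_univ, true_and] at hp
    simp [cons, length, hp.2]
  · intro c hc
    obtain ⟨i, l, hb⟩ := List.exists_cons_of_length_eq_add_one (mem_filter.1 hc).2
    ext1
    simp [cons, tail, hb]
  · intro p hp
    rfl
  · intro c hc
    obtain ⟨i, l, hb⟩ := List.exists_cons_of_length_eq_add_one (mem_filter.1 hc).2
    simp [tail, hb]

end Composition

theorem eq_pow_of_succ_eq_mul {M : Type*} [Monoid M] {a : ℕ → M} (h0 : a 0 = 1)
    (hsucc : ∀ r, a (r + 1) = a 1 * a r) (r : ℕ) : a r = a 1 ^ r := by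
  induction r with
  | zero => rw [h0, pow_zero]
  | succ r ih => rw [hsucc, ih, pow_succ']

theorem eq_blockProdSum_of_succ_eq_sum {R : Type*} [Semiring R] {A : ℕ → ℕ → R}
    (h0 : ∀ n, A n 0 = if n = 0 then 1 else 0) (h01 : A 0 1 = 0)
    (hrec : ∀ n r, A n (r + 1) = ∑ i ∈ range (n + 1), A i 1 * A (n - i) r) (n r : ℕ) :
    A n r = Composition.blockProdSum (A · 1) n r := by
  induction r generalizing n with
  | zero => rw [h0, Composition.blockProdSum_zero_right]
  | succ r ih =>
    rw [hrec, Composition.blockProdSum_succ, range_eq_Ico, sum_eq_sum_Ico_succ_bot n.succ_pos,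
      h01, zero_mul, zero_add, zero_add, Nat.succ_eq_add_one, Ico_add_one_right_eq_Icc]
    exact sum_congr rfl fun i _ => by rw [ih]

namespace Module.Basis

variable {ι R M : Type*} [Semiring R] [AddCommMonoid M] [Module R M]

theorem eq_sum_repr_smul_of_support_subset (b : Basis ι R M) {x : M} {s : Finset ι}
    (hs : (b.repr x).support ⊆ s) : x = ∑ i ∈ s, b.repr x i • b i := by
  conv_lhs => rw [← b.linearCombination_repr x]
  rw [Finsupp.linearCombination_apply]
  exact Finsupp.sum_of_support_subset _ hs _ fun _ _ => zero_smul R _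

end Module.Basis

section PathCoalgebra

variable {k C : Type*} [CommSemiring k] [AddCommMonoid C] [Module k C] (b : Module.Basis ℕ k C)

theorem counit_eq_coord_zero {counit : C →ₗ[k] k}
    (hcounit : ∀ n, counit (b n) = if n = 0 then 1 else 0) : counit = b.coord 0 :=
  b.ext fun n => by simp [hcounit, Finsupp.single_apply]

theorem tensorProduct_repr_comul {comul : C →ₗ[k] C ⊗[k] C}
    (hcomul : ∀ n, comul (b n) = ∑ i ∈ range (n + 1), b i ⊗ₜ[k] b (n - i)) (x : C) (p q : ℕ) :
    (b.tensorProduct b).repr (comul x) (p, q) = b.repr x (p + q) := by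
  have hmaps : Finsupp.lapply (p, q) ∘ₗ (b.tensorProduct b).repr.toLinearMap ∘ₗ comul =
      Finsupp.lapply (p + q) ∘ₗ b.repr.toLinearMap := b.ext fun n => by
    simp only [LinearMap.comp_apply, LinearEquiv.coe_coe, Finsupp.lapply_apply, hcomul, map_sum,
      Module.Basis.tensorProduct_repr_tmul_apply, Module.Basis.repr_self,
      Finsupp.single_apply, smul_eq_mul, mul_ite, mul_one, mul_zero]
    rw [sum_ite_eq']
    split_ifs <;> simp_all
    omega
  exact LinearMap.congr_fun hmaps x

variable {f : C →ₗ[k] C}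

theorem repr_apply_add_of_comul_comp_eq {comul : C →ₗ[k] C ⊗[k] C}
    (hcomul : ∀ n, comul (b n) = ∑ i ∈ range (n + 1), b i ⊗ₜ[k] b (n - i))
    (hf : comul ∘ₗ f = TensorProduct.map f f ∘ₗ comul) (n p q : ℕ) :
    b.repr (f (b n)) (p + q) =
      ∑ i ∈ range (n + 1), b.repr (f (b i)) p * b.repr (f (b (n - i))) q := by
  have h := congr((b.tensorProduct b).repr ($hf (b n)) (p, q))
  rw [LinearMap.comp_apply, LinearMap.comp_apply, tensorProduct_repr_comul b hcomul, hcomul] at h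
  simpa [Module.Basis.tensorProduct_repr_tmul_apply, mul_comm] using h

theorem repr_apply_zero_of_counit_comp_eq {counit : C →ₗ[k] k}
    (hcounit : ∀ n, counit (b n) = if n = 0 then 1 else 0) (hf : counit ∘ₗ f = counit) (n : ℕ) :
    b.repr (f (b n)) 0 = if n = 0 then 1 else 0 := by
  rw [← b.coord_apply, ← counit_eq_coord_zero b hcounit, ← LinearMap.comp_apply counit f, hf,
    hcounit]

end PathCoalgebra

/-- Any coalgebra endomorphism `f` of the loop path coalgebra (basis `α_n`,
`Δ(α_n) = Σ_{i+j=n} α_i ⊗ α_j`, `ε(α_n) = δ_{n,0}`) fixes `α_0` and is determined by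
scalars `λ_1, λ_2, …` via
`f(α_n) = Σ_{r=1}^{n} (Σ_{n_1+⋯+n_r=n, n_i ≥ 1} λ_{n_1}⋯λ_{n_r}) α_r` for all `n ≥ 1`.
The inner sum over positive compositions of `n` of length `r` is expressed with
Mathlib's `Composition n`. -/
theorem stmt_3 (k C : Type*) [Field k] [AddCommGroup C] [Module k C]
    (b : Module.Basis ℕ k C)
    (comul : C →ₗ[k] C ⊗[k] C) (counit : C →ₗ[k] k)
    (hcomul : ∀ n, comul (b n) = ∑ i ∈ Finset.range (n + 1), b i ⊗ₜ[k] b (n - i))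
    (hcounit : ∀ n, counit (b n) = if n = 0 then 1 else 0)
    (f : C →ₗ[k] C)
    (hf1 : comul ∘ₗ f = TensorProduct.map f f ∘ₗ comul)
    (hf2 : counit ∘ₗ f = counit) :
    f (b 0) = b 0 ∧
      ∃ lam : ℕ → k, ∀ n, 1 ≤ n →
        f (b n) = ∑ r ∈ Finset.Icc 1 n,
          (∑ c ∈ Finset.univ.filter (fun c : Composition n => c.length = r),
            (c.blocks.map lam).prod) • b r := by
  set A : ℕ → ℕ → k := fun n m => b.repr (f (b n)) m
  have hA0 : ∀ n, A n 0 = if n = 0 then 1 else 0 :=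
    repr_apply_zero_of_counit_comp_eq b hcounit hf2
  have hrec (n r : ℕ) : A n (r + 1) = ∑ i ∈ range (n + 1), A i 1 * A (n - i) r := by
    rw [add_comm]
    exact repr_apply_add_of_comul_comp_eq b hcomul hf1 n 1 r
  have hA01 : A 0 1 = 0 := by
    obtain ⟨m, hm⟩ := Infinite.exists_notMem_finset (b.repr (f (b 0))).support
    refine IsNilpotent.eq_zero ⟨m, ?_⟩
    rw [← eq_pow_of_succ_eq_mul (a := A 0) (by simpa using hA0 0) fun r => by simpa using hrec 0 r]
    exact Finsupp.notMem_support_iff.1 hm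
  have hA := eq_blockProdSum_of_succ_eq_sum hA0 hA01 hrec
  refine ⟨b.repr.injective (Finsupp.ext fun m => ?_), (A · 1), fun n hn => ?_⟩
  · rw [b.repr_self, Finsupp.single_eq_pi_single, Pi.single_apply]
    exact (hA 0 m).trans (Composition.blockProdSum_zero_left _ m)
  refine (b.eq_sum_repr_smul_of_support_subset fun m hm => ?_).trans
    (sum_congr rfl fun r _ => congrArg (· • b r) (hA n r))
  rw [Finsupp.mem_support_iff] at hm
  refine mem_Icc.2 ⟨Nat.one_le_iff_ne_zero.2 ?_, not_lt.1 fun hnm => ?_⟩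
  · rintro rfl
    exact hm ((hA0 n).trans (if_neg (by omega)))
  · exact hm ((hA n m).trans (Composition.blockProdSum_of_lt _ hnm))
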